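/- Theorem 1 (hypergradient error bound): Let H, H_k be symmetric positive semidefinite p×p real matrices, ρ > 0, g ∈ ℝᵖ a row vector, F a p×h real matrix, and c ∈ ℝʰ. Define h⋆ = -gᵀ(H+ρI)⁻¹F + cᵀ and h = -gᵀ(H_k+ρI)⁻¹F + cᵀ. Then ‖h⋆ - h‖₂ ≤ ‖g‖₂ · ‖F‖_op · (1/ρ)·‖H - H_k‖_op/(ρ + ‖H - H_k‖_op). -/

import Mathlib

/-!
Write `A = H + ρ • 1`, `B = H_k + ρ • 1` and `e = ‖H - H_k‖`, and work in the Loewner order.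
Since `H_k - H ≤ e • 1` and `ρ • 1 ≤ A`, we get `B ≤ A + e • 1 ≤ ((ρ + e) / ρ) • A`. Inversion is
antitone on positive definite matrices, so `(ρ / (ρ + e)) • A⁻¹ ≤ B⁻¹`, whence
`A⁻¹ - B⁻¹ ≤ (e / (ρ + e)) • A⁻¹ ≤ (e / (ρ (ρ + e))) • 1`. Exchanging `H` and `H_k` gives the lower
bound, and a Hermitian matrix squeezed between `-c • 1` and `c • 1` has operator norm at most `c`.
The factors `g` and `F` then come out by submultiplicativity of the operator norm.
-/

open Matrix
open scoped Matrix.Norms.L2Operator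

namespace Matrix

section

open scoped MatrixOrder ComplexOrder

variable {𝕜 n : Type*} [RCLike 𝕜] [DecidableEq n]

lemma isHermitian_real_smul_one (c : ℝ) : (c • (1 : Matrix n n 𝕜)).IsHermitian :=
  isHermitian_one.smul (IsSelfAdjoint.all c)

variable [Fintype n]

theorem PosDef.inv_le_inv {A B : Matrix n n 𝕜} (hA : A.PosDef) (hAB : A ≤ B) : B⁻¹ ≤ A⁻¹ := by
  have hB : B.PosDef := by simpa using hA.add_posSemidef hAB
  have hA' := (isUnit_iff_isUnit_det A).mp hA.isUnit
  have hB' := (isUnit_iff_isUnit_det B).mp hB.isUnit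
  have key : A⁻¹ - B⁻¹ = (A⁻¹ - B⁻¹)ᴴ * A * (A⁻¹ - B⁻¹) + (B⁻¹)ᴴ * (B - A) * B⁻¹ := by
    rw [conjTranspose_sub, hA.inv.isHermitian.eq, hB.inv.isHermitian.eq]
    simp only [mul_sub, sub_mul, nonsing_inv_mul _ hA', nonsing_inv_mul _ hB', Matrix.mul_assoc,
      mul_nonsing_inv _ hA', Matrix.mul_one, Matrix.one_mul]
    abel
  rw [le_iff, key]
  exact (hA.posSemidef.conjTranspose_mul_mul_same _).add (hAB.conjTranspose_mul_mul_same _)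

lemma inv_real_smul {A : Matrix n n 𝕜} (hA : IsUnit A.det) {c : ℝ} (hc : c ≠ 0) :
    (c • A)⁻¹ = c⁻¹ • A⁻¹ :=
  inv_eq_left_inv <| by rw [smul_mul_smul, inv_mul_cancel₀ hc, nonsing_inv_mul _ hA, one_smul]

open RCLike

lemma re_inner_toEuclideanLin_real_smul_one (c : ℝ) (x : EuclideanSpace 𝕜 n) :
    re (inner 𝕜 (toEuclideanLin (c • (1 : Matrix n n 𝕜)) x) x) = c * ‖x‖ ^ 2 := by
  rw [real_smul_eq_coe_smul (K := 𝕜), map_smul, LinearMap.smul_apply, toLpLin_one,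
    LinearMap.id_apply, inner_smul_left, conj_ofReal, re_ofReal_mul, inner_self_eq_norm_sq]

lemma re_inner_toEuclideanLin_le_of_le {A B : Matrix n n 𝕜} (h : A ≤ B)
    (x : EuclideanSpace 𝕜 n) :
    re (inner 𝕜 (toEuclideanLin A x) x) ≤ re (inner 𝕜 (toEuclideanLin B x) x) := by
  have := (isPositive_toEuclideanLin_iff.mpr h).re_inner_nonneg_left x
  rwa [map_sub, LinearMap.sub_apply, inner_sub_left, map_sub, sub_nonneg] at this

theorem IsHermitian.le_l2_opNorm_smul_one {A : Matrix n n 𝕜} (hA : A.IsHermitian) :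
    A ≤ ‖A‖ • 1 := by
  rw [le_iff, ← isPositive_toEuclideanLin_iff]
  refine ⟨isSymmetric_toEuclideanLin_iff.mpr ((isHermitian_real_smul_one _).sub hA), fun x => ?_⟩
  have hAx : re (inner 𝕜 (toEuclideanLin A x) x) ≤ ‖A‖ * ‖x‖ ^ 2 :=
    calc re (inner 𝕜 (toEuclideanLin A x) x) ≤ ‖toEuclideanCLM (𝕜 := 𝕜) A x‖ * ‖x‖ :=
          (re_le_norm _).trans (norm_inner_le_norm _ _)
      _ ≤ ‖A‖ * ‖x‖ * ‖x‖ := by gcongr; exact (toEuclideanCLM (𝕜 := 𝕜) A).le_opNorm x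
      _ = ‖A‖ * ‖x‖ ^ 2 := by ring
  rw [map_sub, LinearMap.sub_apply, inner_sub_left, map_sub,
    re_inner_toEuclideanLin_real_smul_one]
  linarith

theorem l2_opNorm_le_of_mem_Icc {A : Matrix n n 𝕜} {c : ℝ} (hc : 0 ≤ c)
    (hA : A ∈ Set.Icc (-(c • 1)) (c • 1)) : ‖A‖ ≤ c := by
  have hHerm : A.IsHermitian := by
    simpa using (isHermitian_real_smul_one c).sub hA.2.isHermitian
  rw [← l2_opNorm_toEuclideanCLM, ContinuousLinearMap.norm_eq_iSup_rayleighQuotient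
    (toEuclideanCLM (𝕜 := 𝕜) A) (isSymmetric_toEuclideanLin_iff.mpr hHerm)]
  refine ciSup_le fun x => ?_
  rcases eq_or_ne x 0 with rfl | hx
  · simpa using hc
  have hlower := re_inner_toEuclideanLin_le_of_le hA.1 x
  have hupper := re_inner_toEuclideanLin_le_of_le hA.2 x
  rw [map_neg, LinearMap.neg_apply, inner_neg_left, map_neg,
    re_inner_toEuclideanLin_real_smul_one] at hlower
  rw [re_inner_toEuclideanLin_real_smul_one] at hupper
  have hx2 : 0 < ‖x‖ ^ 2 := by positivity
  rw [ContinuousLinearMap.rayleighQuotient, ContinuousLinearMap.reApplyInnerSelf_apply, abs_div,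
    abs_of_pos hx2, div_le_iff₀ hx2, abs_le]
  exact ⟨hlower, hupper⟩

variable {H Hk : Matrix n n 𝕜} {ρ : ℝ}

theorem PosSemidef.add_smul_one_inv_le (hH : H.PosSemidef) (hρ : 0 < ρ) :
    (H + ρ • 1)⁻¹ ≤ ρ⁻¹ • 1 := by
  have hle : ρ • 1 ≤ H + ρ • 1 := by rwa [le_iff, add_sub_cancel_right]
  have := (PosDef.one.smul hρ).inv_le_inv hle
  rwa [inv_real_smul (by simp) hρ.ne', inv_one] at this

theorem PosSemidef.add_smul_one_inv_sub_le (hH : H.PosSemidef) (hHk : Hk.PosSemidef)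
    (hρ : 0 < ρ) :
    (H + ρ • 1)⁻¹ - (Hk + ρ • 1)⁻¹ ≤ (ρ⁻¹ * (‖H - Hk‖ / (ρ + ‖H - Hk‖))) • 1 := by
  set e := ‖H - Hk‖ with he
  set A := H + ρ • 1
  set B := Hk + ρ • 1
  have he0 : 0 ≤ e := norm_nonneg _
  have hA : A.PosDef := PosDef.posSemidef_add hH (PosDef.one.smul hρ)
  have hB : B.PosDef := PosDef.posSemidef_add hHk (PosDef.one.smul hρ)
  have hBA : B ≤ ((ρ + e) / ρ) • A := by
    have hE : Hk - H ≤ e • 1 := by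
      simpa [he, norm_sub_rev] using (hHk.isHermitian.sub hH.isHermitian).le_l2_opNorm_smul_one
    rw [le_iff]
    convert (le_iff.mp hE).add (hH.smul (div_nonneg he0 hρ.le)) using 1
    match_scalars <;> field_simp
    ring
  have hinv := hB.inv_le_inv hBA
  rw [inv_real_smul ((isUnit_iff_isUnit_det A).mp hA.isUnit) (by positivity), inv_div] at hinv
  calc A⁻¹ - B⁻¹ ≤ A⁻¹ - (ρ / (ρ + e)) • A⁻¹ := sub_le_sub_left hinv _
    _ = (e / (ρ + e)) • A⁻¹ := by match_scalars; field_simp; ring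
    _ ≤ (e / (ρ + e)) • (ρ⁻¹ • 1) :=
        smul_le_smul_of_nonneg_left (hH.add_smul_one_inv_le hρ) (by positivity)
    _ = (ρ⁻¹ * (e / (ρ + e))) • 1 := by rw [smul_smul, mul_comm]

theorem PosSemidef.l2_opNorm_add_smul_one_inv_sub_le (hH : H.PosSemidef)
    (hHk : Hk.PosSemidef) (hρ : 0 < ρ) :
    ‖(H + ρ • 1)⁻¹ - (Hk + ρ • 1)⁻¹‖ ≤ ρ⁻¹ * (‖H - Hk‖ / (ρ + ‖H - Hk‖)) := by
  refine l2_opNorm_le_of_mem_Icc (by positivity) ⟨neg_le.mpr ?_, hH.add_smul_one_inv_sub_le hHk hρ⟩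
  rw [neg_sub, norm_sub_rev]
  exact hHk.add_smul_one_inv_sub_le hH hρ

end

end Matrix

/-- Row vectors are represented as `1 × n` matrices, on which the L2 operator norm coincides
with the Euclidean norm. -/
theorem hypergradient_error_bound {p h : ℕ}
    (H Hk : Matrix (Fin p) (Fin p) ℝ)
    (hH : H.PosSemidef) (hHk : Hk.PosSemidef) (ρ : ℝ) (hρ : 0 < ρ)
    (g : Matrix (Fin 1) (Fin p) ℝ) (F : Matrix (Fin p) (Fin h) ℝ)
    (c : Matrix (Fin 1) (Fin h) ℝ) :
    ‖(-(g * (H + ρ • (1 : Matrix (Fin p) (Fin p) ℝ))⁻¹ * F) + c)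
        - (-(g * (Hk + ρ • (1 : Matrix (Fin p) (Fin p) ℝ))⁻¹ * F) + c)‖ ≤
      ‖g‖ * ‖F‖ * (ρ⁻¹ * (‖H - Hk‖ / (ρ + ‖H - Hk‖))) := by
  calc _ = ‖g * ((H + ρ • 1)⁻¹ - (Hk + ρ • 1)⁻¹) * F‖ := by
        rw [Matrix.mul_sub, Matrix.sub_mul, ← norm_neg]
        congr 1
        abel
    _ ≤ ‖g‖ * ‖(H + ρ • 1)⁻¹ - (Hk + ρ • 1)⁻¹‖ * ‖F‖ :=
        (l2_opNorm_mul _ _).trans (by gcongr; exact l2_opNorm_mul _ _)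
    _ ≤ ‖g‖ * (ρ⁻¹ * (‖H - Hk‖ / (ρ + ‖H - Hk‖))) * ‖F‖ := by
        gcongr
        exact hH.l2_opNorm_add_smul_one_inv_sub_le hHk hρ
    _ = ‖g‖ * ‖F‖ * (ρ⁻¹ * (‖H - Hk‖ / (ρ + ‖H - Hk‖))) := by ring
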